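/- arXiv:2009.14269 — 7 statements merged into one kernel-verified Lean document; each statement's English description precedes it below -/
import Mathlib

section
/- Let G = G_Γ be an Artin group for which the Σ¹-conjecture holds, i.e., for every character χ of G one has [χ] ∈ Σ¹(G) if and only if L(χ) is a connected dominant subgraph of Γ. Then there exist finitely many subgroups H₁, …, H_s of G such that for every character χ of G: [χ] ∉ Σ¹(G) if and only if χ(H_i) = 0 for some i (in particular, the complement of Σ¹(G) is a rationally defined spherical polyhedron). -/
/-- A (real) character of a group: a nonzero homomorphism to `(ℝ, +)`. -/
def IsCharacter {G : Type*} [Group G] (χ : G → ℝ) : Prop :=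
  (∀ g h : G, χ (g * h) = χ g + χ h) ∧ χ ≠ 0

/-- `χ` is `S`-connected: any two elements of `G_χ = {g | 0 ≤ χ g}` are joined by a
sequence inside `G_χ` whose consecutive members differ by right multiplication by an
element of `S ∪ S⁻¹`. -/
def SConnectedChar {G : Type*} [Group G] (χ : G → ℝ) (S : Set G) : Prop :=
  ∀ a b : G, 0 ≤ χ a → 0 ≤ χ b →
    Relation.ReflTransGen
      (fun x y : G => 0 ≤ χ x ∧ 0 ≤ χ y ∧ ∃ s, (s ∈ S ∨ s⁻¹ ∈ S) ∧ y = x * s) a b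

/-- `[χ] ∈ Σ¹(G)`: `χ` is `S`-connected for every finite generating set `S` of `G`. -/
def MemSigma1 {G : Type*} [Group G] (χ : G → ℝ) : Prop :=
  ∀ S : Finset G, Subgroup.closure (S : Set G) = ⊤ → SConnectedChar χ (S : Set G)

/-- The alternating word `uvu⋯` of length `n` in the free group. -/
def altWord {V : Type*} (u v : V) : ℕ → FreeGroup V
  | 0 => 1
  | n + 1 => FreeGroup.of u * altWord v u n

/-- The Artin relations of a labeled graph. -/
def artinRels {V : Type*} (Γ : SimpleGraph V) (label : V → V → ℕ) : Set (FreeGroup V) :=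
  {r | ∃ u v : V, Γ.Adj u v ∧ r = altWord u v (label u v) * (altWord v u (label u v))⁻¹}

/-- The Artin group of a labeled graph. -/
abbrev ArtinGroup {V : Type*} (Γ : SimpleGraph V) (label : V → V → ℕ) : Type _ :=
  PresentedGroup (artinRels Γ label)

/-- The full subgraph `L_F` of `Γ` induced on vertices where `c` is nonzero. -/
def fullSupportSubgraph {V : Type*} (Γ : SimpleGraph V) (c : V → ℝ) : Γ.Subgraph where
  verts := {v | c v ≠ 0}
  Adj u v := Γ.Adj u v ∧ c u ≠ 0 ∧ c v ≠ 0
  adj_sub h := h.1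
  edge_vert h := h.2.1
  symm := ⟨fun u v h => ⟨h.1.symm, h.2.2, h.2.1⟩⟩

/-- The living subgraph `L(χ)`: the full subgraph on vertices with nonzero value,
with all dead edges (even label `> 2` and opposite values) removed. -/
def livingSubgraph {V : Type*} (Γ : SimpleGraph V) (label : V → V → ℕ) (c : V → ℝ)
    (hsym : ∀ u v, label u v = label v u) : Γ.Subgraph where
  verts := {v | c v ≠ 0}
  Adj u v := Γ.Adj u v ∧ c u ≠ 0 ∧ c v ≠ 0 ∧
    ¬ (Even (label u v) ∧ 2 < label u v ∧ c u = - c v)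
  adj_sub h := h.1
  edge_vert h := h.2.1
  symm := by
    constructor
    rintro u v ⟨h1, h2, h3, h4⟩
    refine ⟨h1.symm, h3, h2, ?_⟩
    rw [hsym v u]
    rintro ⟨he, hl, hc⟩
    exact h4 ⟨he, hl, by linarith⟩

/-- A subgraph is dominant if every vertex outside of it is adjacent in `Γ`
to a vertex of the subgraph. -/
def IsDominant {V : Type*} (Γ : SimpleGraph V) (H : Γ.Subgraph) : Prop :=
  ∀ v : V, v ∉ H.verts → ∃ u ∈ H.verts, Γ.Adj v u

/-- Condition (O): every closed reduced walk all of whose edges have labels `> 2`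
has odd length. -/
def ConditionO {V : Type*} (Γ : SimpleGraph V) (label : V → V → ℕ) : Prop :=
  ∀ (v : V) (w : Γ.Walk v v), 0 < w.length →
    List.Chain' (fun d d' : Γ.Dart => d' ≠ d.symm) w.darts →
    (∀ d ∈ w.darts, 2 < label d.toProd.1 d.toProd.2) →
    Odd w.length

/-!
Under the `Σ¹`-conjecture, `[χ] ∉ Σ¹(G_Γ)` means that the living subgraph `L(χ)` is not
dominant or not connected, and both failures are witnessed by linear conditions on the vertex
values `c v = χ v`. `L(χ)` fails to be dominant iff `c` vanishes on some vertex and all its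
neighbours, i.e. `χ` kills the subgroup generated by that star. `L(χ)` is disconnected iff its
vertex set splits into nonempty parts `A`, `B` joined only by dead edges: every `Γ`-edge between
`A` and `B` has an even label `> 2`, `c` vanishes outside `A ∪ B` and `c u + c w = 0` along those
edges, i.e. `χ` kills the subgroup generated by the vertices outside `A ∪ B` and the products
`u w`. Conversely, when `L(χ)` is dominant the support of `c` meets both sides of such a cut, which
then disconnects `L(χ)`. There are only finitely many stars and cuts.
-/

open SimpleGraph

section LivingSubgraph

variable {V : Type*} {Γ : SimpleGraph V} {label : V → V → ℕ} {c : V → ℝ} {A B : Set V}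

def IsEvenLabelCut (Γ : SimpleGraph V) (label : V → V → ℕ) (A B : Set V) : Prop :=
  A.Nonempty ∧ B.Nonempty ∧ Disjoint A B ∧
    ∀ u ∈ A, ∀ w ∈ B, Γ.Adj u w → Even (label u w) ∧ 2 < label u w

def IsBalancedOn (Γ : SimpleGraph V) (c : V → ℝ) (A B : Set V) : Prop :=
  (∀ w ∉ A ∪ B, c w = 0) ∧ ∀ u ∈ A, ∀ w ∈ B, Γ.Adj u w → c u + c w = 0

lemma IsBalancedOn.symm (h : IsBalancedOn Γ c A B) : IsBalancedOn Γ c B A :=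
  ⟨fun w hw => h.1 w (by rwa [Set.union_comm]), fun u hu w hw huw => by
    rw [add_comm]; exact h.2 w hw u hu huw.symm⟩

lemma not_isDominant_livingSubgraph_iff (hsym : ∀ u v, label u v = label v u) :
    ¬ IsDominant Γ (livingSubgraph Γ label c hsym) ↔
      ∃ v, c v = 0 ∧ ∀ u, Γ.Adj v u → c u = 0 := by
  simp [IsDominant, livingSubgraph, not_imp_not]

lemma exists_ne_zero_of_isBalancedOn {hsym : ∀ u v, label u v = label v u}
    (hdom : IsDominant Γ (livingSubgraph Γ label c hsym)) (hbal : IsBalancedOn Γ c A B)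
    {b : V} (hb : b ∈ B) : ∃ x ∈ B, c x ≠ 0 := by
  rcases ne_or_eq (c b) 0 with hcb | hcb
  · exact ⟨b, hb, hcb⟩
  obtain ⟨u, hu, hbu⟩ := hdom b (not_not.2 hcb)
  have hcu : c u ≠ 0 := hu
  rcases not_not.1 (mt (hbal.1 u) hcu) with huA | huB
  · have := hbal.2 u huA b hb hbu.symm
    exact absurd (by linarith) hcu
  · exact ⟨u, huB, hcu⟩

-- Every `Γ`-edge from `A` to `B` between vertices of the support of `c` is dead.
lemma mem_of_reachable_livingSubgraph {hsym : ∀ u v, label u v = label v u}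
    (hcut : IsEvenLabelCut Γ label A B) (hbal : IsBalancedOn Γ c A B)
    {p q : (livingSubgraph Γ label c hsym).verts}
    (hpq : (livingSubgraph Γ label c hsym).coe.Reachable p q) (hp : (p : V) ∈ A) :
    (q : V) ∈ A := by
  rw [reachable_iff_reflTransGen] at hpq
  induction hpq with
  | refl => exact hp
  | tail _ hadj ih =>
    obtain ⟨huw, -, hcw, hlive⟩ := hadj
    by_contra hwA
    have hwB := (not_not.1 (mt (hbal.1 _) hcw)).resolve_left hwA
    obtain ⟨heven, hlabel⟩ := hcut.2.2.2 _ ih _ hwB huw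
    exact hlive ⟨heven, hlabel, by linarith [hbal.2 _ ih _ hwB huw]⟩

lemma not_connected_livingSubgraph_of_isEvenLabelCut {hsym : ∀ u v, label u v = label v u}
    (hdom : IsDominant Γ (livingSubgraph Γ label c hsym))
    (hcut : IsEvenLabelCut Γ label A B) (hbal : IsBalancedOn Γ c A B) :
    ¬ (livingSubgraph Γ label c hsym).Connected := by
  intro hconn
  obtain ⟨a, haA, hca⟩ := exists_ne_zero_of_isBalancedOn hdom hbal.symm hcut.1.some_mem
  obtain ⟨b, hbB, hcb⟩ := exists_ne_zero_of_isBalancedOn hdom hbal hcut.2.1.some_mem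
  have hbA : b ∈ A :=
    mem_of_reachable_livingSubgraph (p := ⟨a, hca⟩) (q := ⟨b, hcb⟩) hcut hbal (hconn _ _) haA
  exact Set.disjoint_left.1 hcut.2.2.1 hbA hbB

lemma exists_isEvenLabelCut_of_not_connected (hsym : ∀ u v, label u v = label v u)
    (hc : ∃ v, c v ≠ 0) (hL : ¬ (livingSubgraph Γ label c hsym).Connected) :
    ∃ A B, IsEvenLabelCut Γ label A B ∧ IsBalancedOn Γ c A B := by
  set L := livingSubgraph Γ label c hsym
  obtain ⟨x, y, hxy⟩ : ∃ x y : L.verts, ¬ L.coe.Reachable x y := by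
    by_contra! h
    obtain ⟨v, hv⟩ := hc
    exact hL (Subgraph.connected_iff.2 ⟨⟨h⟩, v, hv⟩)
  set A : Set V := Subtype.val '' {p | L.coe.Reachable x p}
  have hAL : A ⊆ L.verts := Subtype.coe_image_subset _ _
  have hdead : ∀ u ∈ A, ∀ w ∈ L.verts \ A, Γ.Adj u w →
      Even (label u w) ∧ 2 < label u w ∧ c u = -c w := by
    rintro _ ⟨p, hp, rfl⟩ w ⟨hw, hwA⟩ huw
    by_contra hlive
    have hpw : L.coe.Adj p ⟨w, hw⟩ := ⟨huw, p.2, hw, hlive⟩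
    exact hwA ⟨⟨w, hw⟩, hp.trans hpw.reachable, rfl⟩
  refine ⟨A, L.verts \ A, ⟨⟨x, x, Reachable.refl _, rfl⟩, ⟨y, y.2, ?_⟩,
    Set.disjoint_sdiff_right, fun u hu w hw huw => (hdead u hu w hw huw).imp_right And.left⟩,
    fun w hw => ?_, fun u hu w hw huw => ?_⟩
  · rintro ⟨q, hq, hqy⟩
    exact hxy (Subtype.ext hqy ▸ hq)
  · rw [Set.union_sdiff_cancel hAL] at hw
    exact not_not.1 hw
  · linarith [(hdead u hu w hw huw).2.2]

theorem not_connected_and_isDominant_livingSubgraph_iff (hsym : ∀ u v, label u v = label v u)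
    (hc : ∃ v, c v ≠ 0) :
    ¬ ((livingSubgraph Γ label c hsym).Connected ∧
        IsDominant Γ (livingSubgraph Γ label c hsym)) ↔
      (∃ v, c v = 0 ∧ ∀ u, Γ.Adj v u → c u = 0) ∨
        ∃ A B, IsEvenLabelCut Γ label A B ∧ IsBalancedOn Γ c A B := by
  rw [← not_isDominant_livingSubgraph_iff hsym]
  constructor
  · intro h
    by_cases hdom : IsDominant Γ (livingSubgraph Γ label c hsym)
    · exact .inr (exists_isEvenLabelCut_of_not_connected hsym hc fun hconn => h ⟨hconn, hdom⟩)
    · exact .inl hdom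
  · rintro (hndom | ⟨A, B, hcut, hbal⟩) ⟨hconn, hdom⟩
    · exact hndom hdom
    · exact not_connected_livingSubgraph_of_isEvenLabelCut hdom hcut hbal hconn

end LivingSubgraph

section Character

variable {G : Type*} [Group G] {χ : G → ℝ}

def toMultiplicativeHom (χ : G → ℝ) (hχ : ∀ g h : G, χ (g * h) = χ g + χ h) :
    G →* Multiplicative ℝ :=
  MonoidHom.mk' (fun g => .ofAdd (χ g)) fun g h => by rw [hχ]; rfl

lemma forall_mem_closure_eq_zero_iff (hχ : ∀ g h : G, χ (g * h) = χ g + χ h) {S : Set G} :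
    (∀ g ∈ Subgroup.closure S, χ g = 0) ↔ ∀ g ∈ S, χ g = 0 := by
  refine ⟨fun h g hg => h g (Subgroup.subset_closure hg), fun h g hg => ?_⟩
  have hker : Subgroup.closure S ≤ (toMultiplicativeHom χ hχ).ker :=
    (Subgroup.closure_le _).2 fun s hs => by simpa [toMultiplicativeHom] using h s hs
  simpa [toMultiplicativeHom] using hker hg

end Character

section ArtinGroup

variable {V : Type*} {Γ : SimpleGraph V} {label : V → V → ℕ} {χ : ArtinGroup Γ label → ℝ}

lemma IsCharacter.exists_vertex_ne_zero (hχ : IsCharacter χ) : ∃ v, χ (PresentedGroup.of v) ≠ 0 := by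
  by_contra! h
  refine hχ.2 (funext fun g => ?_)
  have hg : g ∈ Subgroup.closure (Set.range PresentedGroup.of) := by
    rw [PresentedGroup.closure_range_of]; trivial
  exact (forall_mem_closure_eq_zero_iff hχ.1).2 (by simpa using h) g hg

variable (Γ label)

def starSubgroup (v : V) : Subgroup (ArtinGroup Γ label) :=
  Subgroup.closure (PresentedGroup.of '' insert v (Γ.neighborSet v))

def cutSubgroup (A B : Set V) : Subgroup (ArtinGroup Γ label) :=
  Subgroup.closure (PresentedGroup.of '' (A ∪ B)ᶜ ∪
    {g | ∃ u ∈ A, ∃ w ∈ B, Γ.Adj u w ∧ g = PresentedGroup.of u * PresentedGroup.of w})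

variable {Γ label}

lemma forall_mem_starSubgroup_eq_zero_iff (hχ : ∀ g h, χ (g * h) = χ g + χ h) (v : V) :
    (∀ g ∈ starSubgroup Γ label v, χ g = 0) ↔
      χ (PresentedGroup.of v) = 0 ∧ ∀ u, Γ.Adj v u → χ (PresentedGroup.of u) = 0 := by
  rw [starSubgroup, forall_mem_closure_eq_zero_iff hχ, Set.forall_mem_image, Set.forall_mem_insert]
  rfl

lemma forall_mem_cutSubgroup_eq_zero_iff (hχ : ∀ g h, χ (g * h) = χ g + χ h) (A B : Set V) :
    (∀ g ∈ cutSubgroup Γ label A B, χ g = 0) ↔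
      IsBalancedOn Γ (fun v => χ (PresentedGroup.of v)) A B := by
  rw [cutSubgroup, forall_mem_closure_eq_zero_iff hχ]
  simp only [Set.mem_union, or_imp, forall_and, Set.forall_mem_image]
  refine and_congr Iff.rfl ⟨fun h u hu w hw huw => ?_, ?_⟩
  · rw [← hχ]; exact h _ ⟨u, hu, w, hw, huw, rfl⟩
  · rintro h _ ⟨u, hu, w, hw, huw, rfl⟩
    rw [hχ]; exact h u hu w hw huw

variable (Γ label)

def sigmaComplementSubgroup :
    V ⊕ {p : Set V × Set V // IsEvenLabelCut Γ label p.1 p.2} → Subgroup (ArtinGroup Γ label) :=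
  Sum.elim (starSubgroup Γ label) fun p => cutSubgroup Γ label p.1.1 p.1.2

variable {Γ label}

theorem not_connected_and_isDominant_iff_exists_sigmaComplementSubgroup
    (hsym : ∀ u v, label u v = label v u) (hχ : IsCharacter χ) :
    ¬ ((livingSubgraph Γ label (fun v => χ (PresentedGroup.of v)) hsym).Connected ∧
        IsDominant Γ (livingSubgraph Γ label (fun v => χ (PresentedGroup.of v)) hsym)) ↔
      ∃ i, ∀ g ∈ sigmaComplementSubgroup Γ label i, χ g = 0 := by
  rw [not_connected_and_isDominant_livingSubgraph_iff hsym hχ.exists_vertex_ne_zero]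
  simp only [Sum.exists, Subtype.exists, Prod.exists, sigmaComplementSubgroup, Sum.elim_inl,
    Sum.elim_inr, forall_mem_starSubgroup_eq_zero_iff hχ.1,
    forall_mem_cutSubgroup_eq_zero_iff hχ.1, exists_prop]

end ArtinGroup

theorem statement2_general {V : Type} [Fintype V] (Γ : SimpleGraph V) (label : V → V → ℕ)
    (hsym : ∀ u v, label u v = label v u)
    (hconj : ∀ χ : ArtinGroup Γ label → ℝ, IsCharacter χ →
      (MemSigma1 χ ↔
        ((livingSubgraph Γ label (fun v => χ (PresentedGroup.of v)) hsym).Connected ∧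
          IsDominant Γ (livingSubgraph Γ label (fun v => χ (PresentedGroup.of v)) hsym)))) :
    ∃ (s : ℕ) (H : Fin s → Subgroup (ArtinGroup Γ label)),
      ∀ χ : ArtinGroup Γ label → ℝ, IsCharacter χ →
        (¬ MemSigma1 χ ↔ ∃ i : Fin s, ∀ h ∈ H i, χ h = 0) := by
  obtain ⟨s, ⟨e⟩⟩ :=
    Finite.exists_equiv_fin (V ⊕ {p : Set V × Set V // IsEvenLabelCut Γ label p.1 p.2})
  refine ⟨s, fun i => sigmaComplementSubgroup Γ label (e.symm i), fun χ hχ => ?_⟩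
  rw [hconj χ hχ, not_connected_and_isDominant_iff_exists_sigmaComplementSubgroup hsym hχ,
    e.exists_congr_left]

/-- **Proposition B.** If the `Σ¹`-conjecture holds for the Artin group
`G = G_Γ`, then there are finitely many subgroups `H₁, …, H_s` of `G` such that a
character class lies outside `Σ¹(G)` exactly when the character vanishes on some `Hᵢ`;
in particular `Σ¹(G)ᶜ` is a rationally defined spherical polyhedron. -/
theorem statement2 {V : Type} [Fintype V] (Γ : SimpleGraph V) (label : V → V → ℕ)
    (hsym : ∀ u v, label u v = label v u)
    (hge : ∀ u v, Γ.Adj u v → 2 ≤ label u v)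
    (hconj : ∀ χ : ArtinGroup Γ label → ℝ, IsCharacter χ →
      (MemSigma1 χ ↔
        ((livingSubgraph Γ label (fun v => χ (PresentedGroup.of v)) hsym).Connected ∧
          IsDominant Γ (livingSubgraph Γ label (fun v => χ (PresentedGroup.of v)) hsym)))) :
    ∃ (s : ℕ) (H : Fin s → Subgroup (ArtinGroup Γ label)),
      ∀ χ : ArtinGroup Γ label → ℝ, IsCharacter χ →
        (¬ MemSigma1 χ ↔ ∃ i : Fin s, ∀ h ∈ H i, χ h = 0) :=
  statement2_general Γ label hsym hconj
end

section
/- Let G be a group, x, y ∈ G, m ≥ 2 an integer, and let d : G → ℤG be a derivation with d(x) = 0 and d(y) = 1. Then d([(xy)^m, x]) = (xy)^{−m}(x⁻¹ − 1)(1 + xy + ⋯ + (xy)^{m−1})·x in ℤG. -/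
/-- **Fox derivative with respect to `y`.** If `d : G → ℤG` is a derivation
with `d x = 0` and `d y = 1`, then for `m ≥ 2`,
`d([(xy)^m, x]) = (xy)^{−m}(x⁻¹ − 1)(1 + xy + ⋯ + (xy)^{m−1})·x`. -/
theorem statement6 {G : Type*} [Group G] (x y : G) (m : ℕ) (hm : 2 ≤ m)
    (d : G → MonoidAlgebra ℤ G)
    (hd : ∀ g h : G, d (g * h) = d g + (MonoidAlgebra.of ℤ G g) • d h)
    (hx : d x = 0) (hy : d y = 1) :
    d (((x * y) ^ m)⁻¹ * x⁻¹ * (x * y) ^ m * x) =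
      MonoidAlgebra.of ℤ G (((x * y) ^ m)⁻¹) * (MonoidAlgebra.of ℤ G x⁻¹ - 1) *
        (∑ i ∈ Finset.range m, (MonoidAlgebra.of ℤ G (x * y)) ^ i) *
          MonoidAlgebra.of ℤ G x := by
  set e := MonoidAlgebra.of ℤ G with he
  have hd' : ∀ g h : G, d (g * h) = d g + e g * d h := by
    intro g h; rw [hd]; rfl
  have h1 : d 1 = 0 := by
    have h := hd' 1 1
    simp only [mul_one, map_one, one_mul] at h
    exact (left_eq_add.mp h)
  have hinv : ∀ g : G, d g⁻¹ = - (e g⁻¹ * d g) := by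
    intro g
    have h := hd' g⁻¹ g
    rw [inv_mul_cancel, h1] at h
    exact eq_neg_of_add_eq_zero_left h.symm
  have hxinv : d x⁻¹ = 0 := by rw [hinv, hx, mul_zero, neg_zero]
  have hxy : d (x * y) = e x := by rw [hd', hx, hy, mul_one, zero_add]
  have hpow : ∀ n : ℕ, d ((x * y) ^ n) =
      (∑ i ∈ Finset.range n, (e (x * y)) ^ i) * e x := by
    intro n
    induction n with
    | zero => simp [h1]
    | succ n ih =>
        rw [pow_succ, hd', ih, hxy, Finset.sum_range_succ, add_mul, map_pow]
  have key := hd' (((x * y) ^ m)⁻¹ * x⁻¹ * (x * y) ^ m) x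
  rw [hx, mul_zero, add_zero] at key
  rw [key, hd', hd', hxinv, mul_zero, add_zero, hinv, hpow]
  simp only [map_mul, mul_assoc, mul_sub, sub_mul, one_mul, mul_one]
  noncomm_ring
end

section
/- Let m ≥ 1, let Q be the free abelian group with basis q₁, …, q_m, t, and let R = ℤQ be its integral group ring. Let M be the quotient of the free R-module on generators w₁, …, w_m by the submodule generated by the elements (q_j⁻¹ − 1)·w_i − (q_i⁻¹ − 1)·w_j for all 1 ≤ i, j ≤ m. Then the annihilator of M in R is zero. -/
noncomputable section

/-- The free abelian group on `q₁, …, q_m, t`. -/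
abbrev Q9 (m : ℕ) : Type := FreeAbelianGroup (Fin m ⊕ Unit)

/-- Its integral group ring `R = ℤQ`. -/
abbrev R9 (m : ℕ) : Type := AddMonoidAlgebra ℤ (Q9 m)

/-- The image of `qᵢ⁻¹` in the group ring. -/
abbrev qinv (m : ℕ) (i : Fin m) : R9 m :=
  AddMonoidAlgebra.of' ℤ (Q9 m) (-(FreeAbelianGroup.of (Sum.inl i : Fin m ⊕ Unit)))

/-- The relations `(q_j⁻¹ − 1)·w_i − (q_i⁻¹ − 1)·w_j`. -/
def rel9 (m : ℕ) : Set (Fin m →₀ R9 m) :=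
  {z | ∃ i j : Fin m,
    z = Finsupp.single i (qinv m j - 1) - Finsupp.single j (qinv m i - 1)}

/-- The quotient module `M`. -/
abbrev M9 (m : ℕ) : Type := (Fin m →₀ R9 m) ⧸ Submodule.span (R9 m) (rel9 m)

def koszulRelations {R ι : Type*} [CommRing R] (a : ι → R) : Set (ι →₀ R) :=
  {z | ∃ i j : ι, z = Finsupp.single i (a j) - Finsupp.single j (a i)}

section KoszulRelations

variable {R ι : Type*} [CommRing R] (a : ι → R)

lemma koszulRelations_span_le_ker_linearCombination :
    Submodule.span R (koszulRelations a) ≤ LinearMap.ker (Finsupp.linearCombination R a) := by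
  rw [Submodule.span_le]
  rintro z ⟨i, j, rfl⟩
  simp only [SetLike.mem_coe, LinearMap.mem_ker, map_sub, Finsupp.linearCombination_single,
    smul_eq_mul]
  ring

/-- `eᵢ ↦ aᵢ` factors through the quotient, so `r • eᵢ = 0` there gives `r * aᵢ = 0`. -/
lemma mul_eq_zero_of_annihilates_quotient_koszulRelations {r : R}
    (hr : ∀ x : (ι →₀ R) ⧸ Submodule.span R (koszulRelations a), r • x = 0) (i : ι) :
    r * a i = 0 := by
  have hmem : Finsupp.single i r ∈ Submodule.span R (koszulRelations a) := by
    simpa [← Submodule.Quotient.mk_smul, Submodule.Quotient.mk_eq_zero] using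
      hr (Submodule.Quotient.mk (Finsupp.single i 1))
  simpa using koszulRelations_span_le_ker_linearCombination a hmem

end KoszulRelations

lemma AddMonoidAlgebra.of'_sub_one_ne_zero {k G : Type*} [Ring k] [Nontrivial k] [AddZeroClass G]
    {g : G} (hg : g ≠ 0) : AddMonoidAlgebra.of' k G g - 1 ≠ 0 := by
  rw [sub_ne_zero, AddMonoidAlgebra.of'_apply, AddMonoidAlgebra.one_def]
  exact (AddMonoidAlgebra.single_left_inj one_ne_zero).not.mpr hg

lemma qinv_sub_one_ne_zero (m : ℕ) (i : Fin m) : qinv m i - 1 ≠ 0 :=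
  AddMonoidAlgebra.of'_sub_one_ne_zero <| neg_ne_zero.mpr <| FreeAbelianGroup.of_ne_zero _

/-- `ℤQ` is a domain: free abelian groups have unique sums. -/
theorem statement9 (m : ℕ) (hm : 1 ≤ m) (r : R9 m)
    (hr : ∀ x : M9 m, r • x = 0) : r = 0 :=
  (mul_eq_zero.mp (mul_eq_zero_of_annihilates_quotient_koszulRelations _ hr ⟨0, hm⟩)
    ).resolve_right (qinv_sub_one_ne_zero m _)

end
end

section
/- In the Laurent polynomial ring ℤ[u^{±1}, v^{±1}, s^{±1}, w^{±1}] (equivalently, the integral group ring of the free abelian group with basis u, v, s, w), the ideal generated by the four elements 1 + uv, 1 + su + (su)², 1 + vw, and 1 + sw is the whole ring. -/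
noncomputable section

/-- The Laurent polynomial ring `ℤ[u^{±1}, v^{±1}, s^{±1}, w^{±1}]`, realized as the
integral group ring of the free abelian group of rank 4. -/
abbrev R10 : Type := AddMonoidAlgebra ℤ (FreeAbelianGroup (Fin 4))

/-- The four Laurent variables (`u = X 0`, `v = X 1`, `s = X 2`, `w = X 3`). -/
abbrev X (i : Fin 4) : R10 := AddMonoidAlgebra.of' ℤ (FreeAbelianGroup (Fin 4)) (FreeAbelianGroup.of i)

/-- In `ℤ[u^{±1}, v^{±1}, s^{±1}, w^{±1}]` the ideal generated by
`1 + uv`, `1 + su + (su)²`, `1 + vw` and `1 + sw` is the whole ring. -/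
theorem statement10 :
    Ideal.span {1 + X 0 * X 1, 1 + X 2 * X 0 + (X 2 * X 0) ^ 2,
      1 + X 1 * X 3, 1 + X 2 * X 3} = (⊤ : Ideal R10) := by
  rw [Ideal.eq_top_iff_one]
  have h : (1 : R10) =
      (1 + X 2 * X 0 + (X 2 * X 0) ^ 2)
      - (X 2 * X 0) * (1 + X 0 * X 1)
      - (X 2 * X 0) ^ 2 * (1 + X 1 * X 3)
      + (X 0 * X 1) * (X 2 * X 0) * (1 + X 2 * X 3) := by ring
  have h1 : (1 + X 0 * X 1 : R10) ∈ Ideal.span {1 + X 0 * X 1,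
      1 + X 2 * X 0 + (X 2 * X 0) ^ 2, 1 + X 1 * X 3, 1 + X 2 * X 3} :=
    Ideal.subset_span (by simp)
  have h2 : (1 + X 2 * X 0 + (X 2 * X 0) ^ 2 : R10) ∈ Ideal.span {1 + X 0 * X 1,
      1 + X 2 * X 0 + (X 2 * X 0) ^ 2, 1 + X 1 * X 3, 1 + X 2 * X 3} :=
    Ideal.subset_span (by simp)
  have h3 : (1 + X 1 * X 3 : R10) ∈ Ideal.span {1 + X 0 * X 1,
      1 + X 2 * X 0 + (X 2 * X 0) ^ 2, 1 + X 1 * X 3, 1 + X 2 * X 3} :=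
    Ideal.subset_span (by simp)
  have h4 : (1 + X 2 * X 3 : R10) ∈ Ideal.span {1 + X 0 * X 1,
      1 + X 2 * X 0 + (X 2 * X 0) ^ 2, 1 + X 1 * X 3, 1 + X 2 * X 3} :=
    Ideal.subset_span (by simp)
  have mem := add_mem (sub_mem (sub_mem h2 (Ideal.mul_mem_left _ (X 2 * X 0) h1))
    (Ideal.mul_mem_left _ ((X 2 * X 0) ^ 2) h3))
    (Ideal.mul_mem_left _ ((X 0 * X 1) * (X 2 * X 0)) h4)
  rw [← h] at mem
  exact mem

end
end

section
/- Let Γ be a finite simple graph with labeled edges satisfying condition (O). Suppose the vertex set of Γ is partitioned as V₁ ⊔ V₂, and let E₀ be a set of edges of Γ, each having label greater than 2 and each joining a vertex of V₁ to a vertex of V₂. Then the spanning subgraph of Γ with edge set E₀ is acyclic (a forest). -/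
/-!
A cycle of the spanning subgraph with edge set `E₀` is a cycle of `Γ` with all labels `> 2`,
and cycles do not backtrack, so condition (O) makes its length odd. On the other hand `E₀` is
properly 2-coloured by the partition `V₁ ⊔ V₂`, so every closed walk along `E₀` has even length.
-/

namespace SimpleGraph

variable {V : Type*} {G : SimpleGraph V}

lemma Walk.IsTrail.isChain_darts_ne_symm {u v : V} {w : G.Walk u v} (hw : w.IsTrail) :
    w.darts.IsChain (fun d d' => d' ≠ d.symm) := by
  have hpairwise : w.darts.Pairwise (fun d d' => d.edge ≠ d'.edge) := by
    have hnodup := hw.edges_nodup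
    rwa [Walk.edges, List.Nodup, List.pairwise_map] at hnodup
  refine (hpairwise.imp fun hne hsymm => hne ?_).isChain
  rw [hsymm, Dart.edge_symm]

end SimpleGraph

open SimpleGraph in
lemma ConditionO.odd_length_of_isCycle {V : Type*} {G Γ : SimpleGraph V} {label : V → V → ℕ}
    (hO : ConditionO Γ label) (hG : G ≤ Γ) {v : V} {c : G.Walk v v} (hc : c.IsCycle)
    (hlabel : ∀ d ∈ c.darts, 2 < label d.fst d.snd) : Odd c.length := by
  have hodd := hO v (c.mapLe hG) (by simpa using hc.three_le_length.trans_lt' three_pos)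
    (hc.mapLe hG).isTrail.isChain_darts_ne_symm (by simpa [Walk.darts_map] using hlabel)
  simpa using hodd

theorem statement12_general {V : Type} (Γ : SimpleGraph V) (label : V → V → ℕ)
    (hO : ConditionO Γ label)
    (p : V → Bool) (E₀ : Set (Sym2 V)) (hE : E₀ ⊆ Γ.edgeSet)
    (hlabel : ∀ u v : V, s(u, v) ∈ E₀ → 2 < label u v)
    (hcross : ∀ u v : V, s(u, v) ∈ E₀ → p u ≠ p v) :
    (SimpleGraph.fromEdgeSet E₀).IsAcyclic := by
  intro v c hc
  let bicoloring : (SimpleGraph.fromEdgeSet E₀).Coloring Bool := .mk p fun h => hcross _ _ h.1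
  have heven : Even c.length := (bicoloring.even_length_iff_congr c).mpr Iff.rfl
  have hle : SimpleGraph.fromEdgeSet E₀ ≤ Γ :=
    (SimpleGraph.fromEdgeSet_le (G := Γ)).mpr (Set.sdiff_subset.trans hE)
  have hodd : Odd c.length :=
    hO.odd_length_of_isCycle hle hc fun d _ =>
      hlabel _ _ ((SimpleGraph.fromEdgeSet_adj E₀).mp d.adj).1
  exact Nat.not_even_iff_odd.mpr hodd heven

/-- If `Γ` satisfies condition (O), its vertex set is partitioned into
`V₁ ⊔ V₂` (recorded by `p : V → Bool`), and `E₀` is a set of edges of `Γ` with labels `> 2`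
each joining `V₁` to `V₂`, then the spanning subgraph with edge set `E₀` is a forest. -/
theorem statement12 {V : Type} [Fintype V] (Γ : SimpleGraph V) (label : V → V → ℕ)
    (hO : ConditionO Γ label)
    (p : V → Bool) (E₀ : Set (Sym2 V)) (hE : E₀ ⊆ Γ.edgeSet)
    (hlabel : ∀ u v : V, s(u, v) ∈ E₀ → 2 < label u v)
    (hcross : ∀ u v : V, s(u, v) ∈ E₀ → p u ≠ p v) :
    (SimpleGraph.fromEdgeSet E₀).IsAcyclic :=
  statement12_general Γ label hO p E₀ hE hlabel hcross
end

section
/- Let π : G → H be a surjective homomorphism of finitely generated groups and let μ be a character of H. If [μ] ∉ Σ¹(H), then [μ∘π] ∉ Σ¹(G). -/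
/-- If `π : G ↠ H` is an epimorphism of finitely generated groups and
`μ` is a character of `H` with `[μ] ∉ Σ¹(H)`, then `[μ ∘ π] ∉ Σ¹(G)`. -/
theorem statement15 {G H : Type*} [Group G] [Group H] [Group.FG G] [Group.FG H]
    (π : G →* H) (hπ : Function.Surjective π)
    (μ : H → ℝ) (hμ : IsCharacter μ) (h : ¬ MemSigma1 μ) :
    ¬ MemSigma1 (μ ∘ π) := by
  classical
  intro hG
  apply h
  intro T hT a b ha hb
  -- section of π on T
  set σ : H → G := fun t => Classical.choose (hπ t) with hσdef
  have hσ : ∀ t, π (σ t) = t := fun t => Classical.choose_spec (hπ t)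
  -- the subgroup generated by lifts of T maps onto H
  set K : Subgroup G := Subgroup.closure (σ '' (T : Set H)) with hK
  have hmapK : Subgroup.map π K = ⊤ := by
    rw [hK, MonoidHom.map_closure]
    have : π '' (σ '' (T : Set H)) = (T : Set H) := by
      ext t; constructor
      · rintro ⟨x, ⟨u, hu, rfl⟩, rfl⟩; rwa [hσ]
      · intro ht; exact ⟨σ t, ⟨t, ht, rfl⟩, hσ t⟩
    rw [this, hT]
  -- for each g, a w g ∈ K with π (w g) = π g
  have hw : ∀ g : G, ∃ w, w ∈ K ∧ π w = π g := by
    intro g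
    have : π g ∈ Subgroup.map π K := hmapK ▸ Subgroup.mem_top _
    obtain ⟨w, hwK, hwπ⟩ := this
    exact ⟨w, hwK, hwπ⟩
  set w : G → G := fun g => Classical.choose (hw g) with hwdef
  have hwK : ∀ g, w g ∈ K := fun g => (Classical.choose_spec (hw g)).1
  have hwπ : ∀ g, π (w g) = π g := fun g => (Classical.choose_spec (hw g)).2
  obtain ⟨S₀, hS₀⟩ : ∃ S₀ : Finset G, Subgroup.closure (S₀ : Set G) = ⊤ :=
    Group.FG.out.elim fun S hS => ⟨S, hS⟩
  set S : Finset G := T.image σ ∪ S₀.image (fun g => g * (w g)⁻¹) with hS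
  -- σ '' T ⊆ S
  have hσT : σ '' (T : Set H) ⊆ (S : Set G) := by
    rintro x ⟨t, ht, rfl⟩
    simp only [hS, Finset.coe_union, Set.mem_union, Finset.coe_image, Set.mem_image]
    exact Or.inl ⟨t, ht, rfl⟩
  have hKle : K ≤ Subgroup.closure (S : Set G) :=
    Subgroup.closure_le (Subgroup.closure (S : Set G)) |>.2
      (hσT.trans Subgroup.subset_closure)
  -- S generates G
  have hSgen : Subgroup.closure (S : Set G) = ⊤ := by
    rw [eq_top_iff, ← hS₀, Subgroup.closure_le]
    intro g hg
    have h1 : g * (w g)⁻¹ ∈ Subgroup.closure (S : Set G) := by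
      apply Subgroup.subset_closure
      simp only [hS, Finset.coe_union, Set.mem_union, Finset.coe_image, Set.mem_image]
      exact Or.inr ⟨g, hg, rfl⟩
    have h2 : w g ∈ Subgroup.closure (S : Set G) := hKle (hwK g)
    simpa using Subgroup.mul_mem _ h1 h2
  -- images of members of S ∪ S⁻¹ under π
  have hπS : ∀ s : G, (s ∈ (S : Set G) ∨ s⁻¹ ∈ (S : Set G)) →
      (π s ∈ (T : Set H) ∨ (π s)⁻¹ ∈ (T : Set H)) ∨ π s = 1 := by
    have key : ∀ s : G, s ∈ (S : Set G) → π s ∈ (T : Set H) ∨ π s = 1 := by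
      intro s hs
      simp only [hS, Finset.coe_union, Set.mem_union, Finset.coe_image, Set.mem_image] at hs
      rcases hs with ⟨t, ht, rfl⟩ | ⟨g, _, rfl⟩
      · rw [hσ]; exact Or.inl ht
      · right; rw [map_mul, map_inv, hwπ, mul_inv_cancel]
    rintro s (hs | hs)
    · rcases key s hs with h1 | h1
      · exact Or.inl (Or.inl h1)
      · exact Or.inr h1
    · rcases key s⁻¹ hs with h1 | h1
      · rw [map_inv] at h1; exact Or.inl (Or.inr h1)
      · rw [map_inv, inv_eq_one] at h1; exact Or.inr h1
  -- lift endpoints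
  obtain ⟨x, rfl⟩ := hπ a
  obtain ⟨y, rfl⟩ := hπ b
  have hpath := hG S hSgen x y (by simpa using ha) (by simpa using hb)
  -- push the path down
  clear ha hb hS₀ hSgen
  induction hpath with
  | refl => exact Relation.ReflTransGen.refl
  | tail _ hstep ih =>
      obtain ⟨hx, hy, s, hsS, rfl⟩ := hstep
      rcases hπS s hsS with hT' | h1
      · exact ih.tail ⟨hx, by simpa using hy, π s, hT', by rw [map_mul]⟩
      · rw [map_mul, h1, mul_one]; exact ih
end

section
/- Let m ≥ 1, let G be the free product of a free abelian group of rank m and an infinite cyclic group, and let H = G/G'', where G'' is the second derived subgroup of G. Then Σ¹(H) is empty, i.e., [μ] ∉ Σ¹(H) for every character μ of H. -/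
instance derivedSeriesNormal {G : Type*} [Group G] (n : ℕ) : (derivedSeries G n).Normal :=
  derivedSeries_normal G n

/-- The free product `G` of a free abelian group of rank `m` and an infinite cyclic
group. -/
abbrev G16 (m : ℕ) : Type :=
  Monoid.Coprod (Multiplicative (FreeAbelianGroup (Fin m))) (Multiplicative ℤ)

/-- The maximal metabelian quotient `H = G/G''`. -/
abbrev H16 (m : ℕ) : Type := G16 m ⧸ derivedSeries (G16 m) 2

/-- The unrestricted wreath product `ℤ ≀ Q = ℤ^Q ⋊ Q`: `q` is the translation part and `f` the
lamp configuration. -/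
@[ext] structure IntWreath (Q : Type*) [AddCommGroup Q] where
  q : Q
  f : Q → ℤ

namespace IntWreath

open scoped commutatorElement

variable {Q : Type*} [AddCommGroup Q]

instance : Mul (IntWreath Q) := ⟨fun x y => ⟨x.q + y.q, fun p => x.f p + y.f (p - x.q)⟩⟩
instance : One (IntWreath Q) := ⟨⟨0, 0⟩⟩
instance : Inv (IntWreath Q) := ⟨fun x => ⟨-x.q, fun p => -x.f (p + x.q)⟩⟩

@[simp] lemma mul_q (x y : IntWreath Q) : (x * y).q = x.q + y.q := rfl
@[simp] lemma mul_f (x y : IntWreath Q) (p : Q) : (x * y).f p = x.f p + y.f (p - x.q) := rfl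
@[simp] lemma one_q : (1 : IntWreath Q).q = 0 := rfl
@[simp] lemma one_f (p : Q) : (1 : IntWreath Q).f p = 0 := rfl
@[simp] lemma inv_q (x : IntWreath Q) : x⁻¹.q = -x.q := rfl
@[simp] lemma inv_f (x : IntWreath Q) (p : Q) : x⁻¹.f p = -x.f (p + x.q) := rfl

instance : Group (IntWreath Q) where
  mul_assoc x y z := by ext <;> simp [sub_sub, add_assoc]
  one_mul x := by ext <;> simp
  mul_one x := by ext <;> simp
  inv_mul_cancel x := by ext <;> simp

def qHom : IntWreath Q →* Multiplicative Q where
  toFun x := .ofAdd x.q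
  map_one' := rfl
  map_mul' _ _ := rfl

lemma commutatorElement_q (x y : IntWreath Q) : ⁅x, y⁆.q = 0 := by
  simp only [commutatorElement_def, mul_q, inv_q]
  abel

lemma derivedSeries_two_eq_bot : derivedSeries (IntWreath Q) 2 = ⊥ := by
  have hq : ∀ x ∈ derivedSeries (IntWreath Q) 1, x.q = 0 := fun x hx =>
    congrArg Multiplicative.toAdd
      (Abelianization.commutator_subset_ker qHom (derivedSeries_one (IntWreath Q) ▸ hx) :
        qHom x = 1)
  rw [eq_bot_iff, derivedSeries_succ, Subgroup.commutator_le]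
  intro x hx y hy
  rw [Subgroup.mem_bot, commutatorElement_eq_one_iff_mul_comm]
  ext <;> simp [hq x hx, hq y hy, add_comm]

lemma conj_f {c : IntWreath Q} (hc : c.q = 0) (x : IntWreath Q) (p : Q) :
    (x * c * x⁻¹).f p = c.f (p - x.q) := by
  simp [hc]

lemma commutatorElement_f {x : IntWreath Q} (hx : x.f = 0) (y : IntWreath Q) (p : Q) :
    ⁅y, x⁆.f p = y.f p - y.f (p - x.q) := by
  have e : p - (y.q + x.q) + y.q = p - x.q := by abel
  simp only [commutatorElement_def, mul_f, mul_q, inv_f, inv_q, hx, Pi.zero_apply, e]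
  ring

lemma mul_f_of_ne {s : IntWreath Q} (hs : ∀ z ≠ 0, s.f z = 0) (x : IntWreath Q) {p : Q}
    (hp : p ≠ x.q) : (x * s).f p = x.f p := by
  simp [hs _ (sub_ne_zero.2 hp)]

lemma mul_inv_f_of_ne {s : IntWreath Q} (hs : ∀ z ≠ 0, s.f z = 0) (x : IntWreath Q) {p : Q}
    (hp : p ≠ (x * s⁻¹).q) : (x * s⁻¹).f p = x.f p := by
  have : p - x.q + s.q ≠ 0 := fun h => hp (by
    rw [mul_q, inv_q, ← sub_eq_zero, ← h]
    abel)
  simp [hs _ this]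

open Classical in
noncomputable def lamp (q₀ : Q) : IntWreath Q := ⟨q₀, fun p => if p = 0 then 1 else 0⟩

@[simp] lemma lamp_q (q₀ : Q) : (lamp q₀).q = q₀ := rfl
@[simp] lemma lamp_f_zero (q₀ : Q) : (lamp q₀).f 0 = 1 := by simp [lamp]
lemma lamp_f_of_ne (q₀ : Q) {z : Q} (hz : z ≠ 0) : (lamp q₀).f z = 0 := by simp [lamp, hz]

end IntWreath

section WreathObstruction

open IntWreath

variable {H Q : Type*} [Group H] [AddCommGroup Q] (ψ : H →* IntWreath Q) (ℓ : Q →+ ℝ)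
  {μ : H → ℝ} {S : Set H}

lemma f_eq_zero_of_reflTransGen_one (hμ : ∀ h, μ h = ℓ (ψ h).q)
    (hS : ∀ s ∈ S, ∀ z ≠ 0, (ψ s).f z = 0) {p : Q} (hp : ℓ p < 0) {b : H}
    (hb : Relation.ReflTransGen
      (fun x y : H => 0 ≤ μ x ∧ 0 ≤ μ y ∧ ∃ s, (s ∈ S ∨ s⁻¹ ∈ S) ∧ y = x * s) 1 b) :
    (ψ b).f p = 0 := by
  have hne : ∀ h, 0 ≤ μ h → p ≠ (ψ h).q := fun h hh hph => by
    rw [hμ, ← hph] at hh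
    linarith
  induction hb with
  | refl => simp
  | tail _ hxy ih =>
    obtain ⟨hx, hy, s, hs | hs, rfl⟩ := hxy
    · rw [map_mul, mul_f_of_ne (hS s hs) _ (hne _ hx), ih]
    · rw [← inv_inv s, map_mul, map_inv,
        mul_inv_f_of_ne (hS _ hs) _ (by simpa using hne _ hy), ih]

theorem not_sConnectedChar_of_wreath (hμ : ∀ h, μ h = ℓ (ψ h).q)
    (hS : ∀ s ∈ S, ∀ z ≠ 0, (ψ s).f z = 0) {c g : H} (hc : (ψ c).q = 0)
    (hc₀ : (ψ c).f 0 ≠ 0) (hg : μ g < 0) : ¬ SConnectedChar μ S := by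
  intro hconn
  have hμ₀ : ∀ h, (ψ h).q = 0 → 0 ≤ μ h := fun h hh => by rw [hμ, hh, map_zero]
  have hb : (ψ (g * c * g⁻¹)).q = 0 := by simp [hc]
  have := f_eq_zero_of_reflTransGen_one ψ ℓ hμ hS (p := (ψ g).q) (by rwa [← hμ])
    (hconn 1 _ (hμ₀ 1 (by simp)) (hμ₀ _ hb))
  rw [map_mul, map_mul, map_inv, conj_f hc, sub_self] at this
  exact hc₀ this

end WreathObstruction

lemma IsCharacter.exists_neg {G : Type*} [Group G] {μ : G → ℝ} (hμ : IsCharacter μ) :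
    ∃ g, μ g < 0 := by
  obtain ⟨g, hg⟩ : ∃ g, μ g ≠ 0 := Function.ne_iff.1 hμ.2
  have h₁ : μ 1 = 0 := by simpa using hμ.1 1 1
  have hinv : μ g⁻¹ = -μ g := by
    have := hμ.1 g g⁻¹
    rw [mul_inv_cancel, h₁] at this
    linarith
  rcases hg.lt_or_gt with h | h
  · exact ⟨g, h⟩
  · exact ⟨g⁻¹, by simp [hinv, h]⟩

namespace H16

open Monoid IntWreath

open scoped commutatorElement

variable {m : ℕ}

def genA (i : Fin m) : H16 m :=
  QuotientGroup.mk (Coprod.inl (.ofAdd (FreeAbelianGroup.of i)))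

def genT (m : ℕ) : H16 m := QuotientGroup.mk (Coprod.inr (.ofAdd 1))

open Classical in
noncomputable def generators (m : ℕ) : Finset (H16 m) :=
  insert (genT m) (Finset.univ.image genA)

lemma closure_generators : Subgroup.closure (generators m : Set (H16 m)) = ⊤ := by
  classical
  rw [eq_top_iff]
  rintro h -
  obtain ⟨g, rfl⟩ := QuotientGroup.mk_surjective h
  induction g using Coprod.induction_on with
  | inl x =>
    rw [← ofAdd_toAdd x]
    generalize x.toAdd = y
    induction y using FreeAbelianGroup.induction_on with
    | zero =>
      rw [ofAdd_zero, map_one, QuotientGroup.mk_one]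
      exact one_mem _
    | of i =>
      exact Subgroup.subset_closure <| Finset.mem_coe.2 <|
        Finset.mem_insert_of_mem (Finset.mem_image_of_mem _ (Finset.mem_univ i))
    | neg y ih =>
      rw [ofAdd_neg, map_inv, QuotientGroup.mk_inv]
      exact inv_mem ih
    | add y z hy hz =>
      rw [ofAdd_add, map_mul, QuotientGroup.mk_mul]
      exact mul_mem hy hz
  | inr k =>
    rw [← ofAdd_toAdd k, ← mul_one k.toAdd, ← smul_eq_mul, ofAdd_zsmul, map_zpow,
      QuotientGroup.mk_zpow]
    exact zpow_mem
      (Subgroup.subset_closure (Finset.mem_coe.2 (Finset.mem_insert_self _ _))) _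
  | mul x y hx hy => exact mul_mem hx hy

/-- The `ℤ^m`-coordinate keeps the images of the `a_i` apart from `0` even where `μ` vanishes. -/
noncomputable def wreathRepOfFree (χ : G16 m →* Multiplicative ℝ) :
    G16 m →* IntWreath (ℝ × FreeAbelianGroup (Fin m)) :=
  Coprod.lift
    { toFun := fun x => ⟨((χ (Coprod.inl x)).toAdd, x.toAdd), 0⟩
      map_one' := by ext <;> simp
      map_mul' := fun x y => by ext <;> simp }
    (zpowersHom _ (lamp ((χ (Coprod.inr (.ofAdd 1))).toAdd, 0)))

variable (χ : H16 m →* Multiplicative ℝ)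

noncomputable def wreathRep : H16 m →* IntWreath (ℝ × FreeAbelianGroup (Fin m)) :=
  QuotientGroup.lift _ (wreathRepOfFree (χ.comp (QuotientGroup.mk' _)))
    ((Subgroup.map_le_iff_le_comap.1 (map_derivedSeries_le_derivedSeries _ 2)).trans
      (by rw [derivedSeries_two_eq_bot (Q := ℝ × FreeAbelianGroup (Fin m)),
        MonoidHom.comap_bot]))

lemma wreathRep_genA (i : Fin m) :
    wreathRep χ (genA i) = ⟨((χ (genA i)).toAdd, FreeAbelianGroup.of i), 0⟩ := rfl

lemma wreathRep_genT : wreathRep χ (genT m) = lamp ((χ (genT m)).toAdd, 0) := by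
  simp only [wreathRep, genT, QuotientGroup.lift_mk, wreathRepOfFree, Coprod.lift_apply_inr,
    zpowersHom_apply, toAdd_ofAdd, zpow_one]
  rfl

lemma fst_q_wreathRep (h : H16 m) : (wreathRep χ h).q.1 = (χ h).toAdd := by
  have : (AddMonoidHom.fst ℝ _).toMultiplicative.comp (qHom.comp (wreathRep χ)) = χ := by
    refine QuotientGroup.monoidHom_ext _ (Coprod.hom_ext (MonoidHom.ext fun x => rfl) ?_)
    refine MonoidHom.ext_mint ?_
    show Multiplicative.ofAdd (wreathRep χ (genT m)).q.1 = χ (genT m)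
    rw [wreathRep_genT]
    rfl
  exact congrArg Multiplicative.toAdd (DFunLike.congr_fun this h)

lemma wreathRep_f_generators {s : H16 m} (hs : s ∈ (generators m : Set (H16 m)))
    {z : ℝ × FreeAbelianGroup (Fin m)} (hz : z ≠ 0) : (wreathRep χ s).f z = 0 := by
  simp only [generators, Finset.coe_insert, Finset.coe_image, Finset.coe_univ, Set.image_univ,
    Set.mem_insert_iff, Set.mem_range] at hs
  rcases hs with rfl | ⟨i, rfl⟩
  · rw [wreathRep_genT, lamp_f_of_ne _ hz]
  · rfl

lemma wreathRep_commutatorElement_f_zero (i : Fin m) :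
    (wreathRep χ ⁅genT m, genA i⁆).f 0 = 1 := by
  rw [map_commutatorElement, commutatorElement_f rfl, wreathRep_genT, lamp_f_zero,
    lamp_f_of_ne, sub_zero]
  simp [wreathRep_genA, FreeAbelianGroup.of_ne_zero]

lemma not_sConnectedChar_generators (hm : 1 ≤ m) {μ : H16 m → ℝ} (hμ : IsCharacter μ) :
    ¬ SConnectedChar μ (generators m) := by
  obtain ⟨g, hg⟩ := hμ.exists_neg
  let χ : H16 m →* Multiplicative ℝ :=
    MonoidHom.mk' (fun h => .ofAdd (μ h)) fun a b => congrArg Multiplicative.ofAdd (hμ.1 a b)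
  exact not_sConnectedChar_of_wreath (wreathRep χ) (AddMonoidHom.fst _ _)
    (fun h => (fst_q_wreathRep χ h).symm) (fun _ hs _ hz => wreathRep_f_generators χ hs hz)
    (c := ⁅genT m, genA ⟨0, hm⟩⁆) (by rw [map_commutatorElement, commutatorElement_q])
    (by rw [wreathRep_commutatorElement_f_zero]; exact one_ne_zero) hg

end H16

/-- For `G` the free product of a free abelian group of rank `m ≥ 1`
and an infinite cyclic group, and `H = G/G''`, the invariant `Σ¹(H)` is empty. -/
theorem statement16 (m : ℕ) (hm : 1 ≤ m) (μ : H16 m → ℝ) (hμ : IsCharacter μ) :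
    ¬ MemSigma1 μ :=
  fun hmem => H16.not_sConnectedChar_generators hm hμ (hmem _ H16.closure_generators)
end
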